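/- Let P be a simply connected particle system on the triangular grid, let c₀, c₁, … be a Gouda-fair sequential execution on P, and let i₀ be an index such that every configuration c_i with i ≥ i₀ occurs infinitely often. If a particle p is incident to a stable edge that is directed outgoing from p in the configurations c_i with i ≥ i₀, then p is not activable in any c_i with i ≥ i₀ and every edge incident to p is stable. -/

import Mathlib

/-! ## The triangular grid -/

/-- Nodes of the triangular grid. -/
abbrev Node : Type := ℤ × ℤ

/-- The six directions `d₀,…,d₅` in cyclic order. -/
def dirv : Fin 6 → Node := ![(1,0), (0,1), (-1,1), (-1,0), (0,-1), (1,-1)]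

/-- Adjacency in the triangular grid. -/
def adj (u v : Node) : Prop := ∃ i : Fin 6, v = u + dirv i

instance (u v : Node) : Decidable (adj u v) := by unfold adj; infer_instance

/-- Reachability inside a set of nodes. -/
def reach (S : Set Node) : Node → Node → Prop :=
  Relation.ReflTransGen (fun a b => a ∈ S ∧ b ∈ S ∧ adj a b)

/-- The subgraph of the grid induced on `S` is connected. -/
def ConnectedOn (S : Set Node) : Prop := ∀ a ∈ S, ∀ b ∈ S, reach S a b

/-- A particle system: a finite nonempty set of nodes inducing a connected subgraph. -/
def IsParticleSystem (P : Finset Node) : Prop := P.Nonempty ∧ ConnectedOn ↑P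

/-- `P` is simply connected: the complement induces a connected subgraph. -/
def SimplyConnected (P : Finset Node) : Prop := ConnectedOn {v : Node | v ∉ P}

/-! ## Configurations -/

/-- A configuration: `c a b = true` means the edge `{a,b}` is directed `a → b`.
The edge `{a,b}` is undirected when `c a b = false` and `c b a = false`. -/
abbrev Cfg : Type := Node → Node → Bool

/-- `{a,b}` is an edge of the graph induced on `P`. -/
def isEdge (P : Finset Node) (a b : Node) : Prop := a ∈ P ∧ b ∈ P ∧ adj a b

instance (P : Finset Node) (a b : Node) : Decidable (isEdge P a b) := by
  unfold isEdge; infer_instance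

/-- Well-formedness of a configuration of `P`: only edges of the induced graph carry a
direction, and an edge is directed in at most one way. -/
def ConfigWF (P : Finset Node) (c : Cfg) : Prop :=
  (∀ a b, c a b = true → isEdge P a b) ∧ (∀ a b, c a b = true → c b a = false)

/-- The set of outgoing directions at `p`. -/
def outSet (P : Finset Node) (c : Cfg) (p : Node) : Set (Fin 6) :=
  {d | p + dirv d ∈ P ∧ c p (p + dirv d) = true}

/-- A set of directions is (cyclically) consecutive. -/
def ConsecutiveSet (S : Set (Fin 6)) : Prop :=
  ∃ (i : Fin 6) (k : ℕ), S = {d | ∃ j : ℕ, j < k ∧ d = i + (Fin.ofNat 6 j)}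

/-- R1 at `p`: no edge incident to `p` is undirected. -/
def R1 (P : Finset Node) (c : Cfg) (p : Node) : Prop :=
  ∀ q, isEdge P p q → (c p q = true ∨ c q p = true)

/-- R2 at `p`: at most three directions are outgoing at `p`. -/
def R2 (P : Finset Node) (c : Cfg) (p : Node) : Prop :=
  (Finset.univ.filter (fun d : Fin 6 => p + dirv d ∈ P ∧ c p (p + dirv d) = true)).card ≤ 3

/-- R3 at `p`: the outgoing directions at `p` are consecutive in the cyclic order. -/
def R3 (P : Finset Node) (c : Cfg) (p : Node) : Prop := ConsecutiveSet (outSet P c p)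

/-- R4 at `p`: no triangle of occupied nodes through `p` forms a directed 3-cycle. -/
def R4 (P : Finset Node) (c : Cfg) (p : Node) : Prop :=
  ¬ ∃ q r : Node, q ∈ P ∧ r ∈ P ∧ adj p q ∧ adj q r ∧ adj r p ∧
    c p q = true ∧ c q r = true ∧ c r p = true

/-- A sink: a particle at which no direction is outgoing. -/
def IsSink (P : Finset Node) (c : Cfg) (p : Node) : Prop :=
  ∀ d : Fin 6, ¬ (p + dirv d ∈ P ∧ c p (p + dirv d) = true)

/-! ## The algorithm -/

/-- Every edge of the induced graph incident to `p` that is undirected becomes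
outgoing from `p`. -/
def orientOut (P : Finset Node) (c : Cfg) (p : Node) : Cfg := fun a b =>
  if a = p ∧ isEdge P a b ∧ c a b = false ∧ c b a = false then true else c a b

/-- Every edge directed outgoing from `p` becomes undirected. -/
def clearOut (c : Cfg) (p : Node) : Cfg := fun a b =>
  if a = p then false else c a b

/-- Activating the particle `p` in the configuration `c`. -/
noncomputable def step (P : Finset Node) (c : Cfg) (p : Node) : Cfg :=
  @ite _ (R2 P (orientOut P c p) p ∧ R3 P (orientOut P c p) p ∧ R4 P (orientOut P c p) p)
    (Classical.propDecidable _)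
    (orientOut P c p) (clearOut c p)

/-- `p` is activable in `c`. -/
def Activable (P : Finset Node) (c : Cfg) (p : Node) : Prop := step P c p ≠ c

/-- A configuration is final when no particle is activable. -/
def Final (P : Finset Node) (c : Cfg) : Prop := ∀ p, ¬ Activable P c p

/-- A sequential execution of the algorithm on `P`. -/
def SeqExec (P : Finset Node) (e : ℕ → Cfg) : Prop :=
  (∀ i, ConfigWF P (e i)) ∧
  ∀ i, (∃ p ∈ P, Activable P (e i) p ∧ e (i+1) = step P (e i) p) ∨
       ((∀ p, ¬ Activable P (e i) p) ∧ e (i+1) = e i)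

/-- A configuration occurs infinitely often in an execution. -/
def InfOften (e : ℕ → Cfg) (c : Cfg) : Prop := ∀ N : ℕ, ∃ i, N ≤ i ∧ e i = c

/-- Gouda fairness of a sequential execution. -/
def GoudaFair (P : Finset Node) (e : ℕ → Cfg) : Prop :=
  ∀ c, InfOften e c → ∀ p ∈ P, Activable P c p → InfOften e (step P c p)

/-- An edge is stable for the suffix starting at `i0`: it is never undirected there. -/
def StableEdge (P : Finset Node) (e : ℕ → Cfg) (i0 : ℕ) (a b : Node) : Prop :=
  isEdge P a b ∧ ∀ i, i0 ≤ i → (e i a b = true ∨ e i b a = true)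

/-- An edge is unstable for the suffix starting at `i0`. -/
def UnstableEdge (P : Finset Node) (e : ℕ → Cfg) (i0 : ℕ) (a b : Node) : Prop :=
  isEdge P a b ∧ ∃ i, i0 ≤ i ∧ e i a b = false ∧ e i b a = false

/-- A final configuration in which every edge is directed, R2, R3 and R4 hold at every
particle and there is exactly one sink. -/
def GoodFinal (P : Finset Node) (c : Cfg) : Prop :=
  Final P c ∧ (∀ p ∈ P, R1 P c p ∧ R2 P c p ∧ R3 P c p ∧ R4 P c p) ∧
  (∃! p, p ∈ P ∧ IsSink P c p)

/-! ## Boundary notions -/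

/-- A boundary particle: some grid neighbour is empty. -/
def BoundaryP (P : Finset Node) (p : Node) : Prop := p ∈ P ∧ ∃ d : Fin 6, p + dirv d ∉ P

/-- A pending particle: exactly one grid neighbour is occupied. -/
def Pending (P : Finset Node) (p : Node) : Prop := p ∈ P ∧ ∃! d : Fin 6, p + dirv d ∈ P

/-- An articulation point of `P`. -/
def Articulation (P : Finset Node) (p : Node) : Prop :=
  p ∈ P ∧ ¬ ConnectedOn (↑(P.erase p))

/-- A `(60k)°` particle: a boundary particle, neither pending nor an articulation point,
whose occupied neighbours are exactly a consecutive arc `p + dᵢ, …, p + d_{i+k}`. -/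
def ThetaParticle (P : Finset Node) (k : ℕ) (p : Node) : Prop :=
  BoundaryP P p ∧ ¬ Pending P p ∧ ¬ Articulation P p ∧
  ∃ i : Fin 6, ∀ d : Fin 6, (p + dirv d ∈ P ↔ ∃ j : ℕ, j ≤ k ∧ d = i + (Fin.ofNat 6 j))

/-! ## Auxiliary configuration surgery -/

/-- Change the state of the edge `{a,b}`: `s` is the new value of `a → b`, `t` of `b → a`. -/
def setEdge (c : Cfg) (a b : Node) (s t : Bool) : Cfg := fun x y =>
  if x = a ∧ y = b then s else if x = b ∧ y = a then t else c x y

/-- Restrict a configuration of `P` to the edges not incident to `p`. -/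
def restrictCfg (c : Cfg) (p : Node) : Cfg := fun a b =>
  if a = p ∨ b = p then false else c a b

/-! ## Port labelings and views -/

/-- A port labeling: for each particle, a map from direction indices to port labels. -/
def PortLab : Type := Node → Fin 6 → Fin 6

/-- A valid port labeling: around each particle the labels are cyclically increasing
(positive chirality) or cyclically decreasing (negative chirality). -/
def ValidLab (L : PortLab) : Prop :=
  ∀ p : Node, (∀ i, L p (i+1) = L p i + 1) ∨ (∀ i, L p (i+1) = L p i - 1)

/-- `p` has positive chirality under `L`. -/
def PosChirality (L : PortLab) (p : Node) : Prop := ∀ i, L p (i+1) = L p i + 1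

/-- The direction index pointing from `a` to its neighbour `b`. -/
noncomputable def dirIdx (a b : Node) : Fin 6 :=
  if h : adj a b then (show ∃ i : Fin 6, b = a + dirv i from h).choose else 0

/-- The label of a path. -/
noncomputable def pathLabel (L : PortLab) : List Node → List (Fin 6 × Fin 6)
  | a :: b :: rest => (L a (dirIdx a b), L b (dirIdx b a)) :: pathLabel L (b :: rest)
  | _ => []

/-- A path of length at most 3 starting at `p` in the graph induced on `P`. -/
def IsPathFrom (P : Finset Node) (p : Node) (l : List Node) : Prop :=
  l.head? = some p ∧ l.length ≤ 4 ∧ (∀ x ∈ l, x ∈ P) ∧ l.Chain' adj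

/-- The view of depth 3 of `p`: the set of labels of paths of length at most 3 from `p`. -/
noncomputable def view3 (P : Finset Node) (L : PortLab) (p : Node) :
    Set (List (Fin 6 × Fin 6)) :=
  {s | ∃ l : List Node, IsPathFrom P p l ∧ pathLabel L l = s}

/-- a particle incident to a stable edge directed outgoing from it is never
activable in the recurrent suffix, and all its incident edges are stable. -/
theorem stable_outgoing_edge
    (P : Finset Node) (hPS : IsParticleSystem P) (hSC : SimplyConnected P)
    (e : ℕ → Cfg) (hexec : SeqExec P e) (hfair : GoudaFair P e)
    (i0 : ℕ) (hrec : ∀ i, i0 ≤ i → InfOften e (e i))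
    (p q : Node) (hedge : isEdge P p q) (hout : ∀ i, i0 ≤ i → e i p q = true) :
    (∀ i, i0 ≤ i → ¬ Activable P (e i) p) ∧
    (∀ r : Node, isEdge P p r → StableEdge P e i0 p r) := by
  -- Outgoing edges from `p` are preserved step by step in the suffix.
  have mono1 : ∀ m, i0 ≤ m → ∀ b, e m p b = true → e (m+1) p b = true := by
    intro m hm b hb
    rcases hexec.2 m with ⟨s, _hsP, _hact, hstep⟩ | ⟨_, hstep⟩
    · by_cases h : R2 P (orientOut P (e m) s) s ∧ R3 P (orientOut P (e m) s) s ∧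
          R4 P (orientOut P (e m) s) s
      · rw [step, if_pos h] at hstep
        rw [hstep]
        unfold orientOut
        split
        · rfl
        · exact hb
      · rw [step, if_neg h] at hstep
        by_cases hsp : p = s
        · exfalso
          have h2 := hout (m+1) (hm.trans (Nat.le_succ m))
          rw [hstep] at h2
          simp [clearOut, hsp] at h2
        · rw [hstep]
          simpa [clearOut, hsp] using hb
    · rw [hstep]; exact hb
  have mono : ∀ m j, i0 ≤ m → m ≤ j → ∀ b, e m p b = true → e j p b = true := by
    intro m j hm hmj
    induction j, hmj using Nat.le_induction with
    | base => intro b hb; exact hb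
    | succ n hn ih =>
        intro b hb
        exact mono1 n (hm.trans hn) b (ih b hb)
  -- Part (i): `p` is never activable in the suffix.
  have notact : ∀ i, i0 ≤ i → ¬ Activable P (e i) p := by
    intro i hi hact
    by_cases h : R2 P (orientOut P (e i) p) p ∧ R3 P (orientOut P (e i) p) p ∧
        R4 P (orientOut P (e i) p) p
    · -- step = orientOut: some edge at p was undirected and becomes outgoing
      have hstep : step P (e i) p = orientOut P (e i) p := by rw [step, if_pos h]
      have hne : orientOut P (e i) p ≠ e i := by rw [← hstep]; exact hact
      obtain ⟨a, b, hab⟩ : ∃ a b, orientOut P (e i) p a b ≠ e i a b := by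
        by_contra hc
        push_neg at hc
        exact hne (funext fun a => funext fun b => hc a b)
      have key : a = p ∧ e i a b = false ∧ orientOut P (e i) p a b = true := by
        unfold orientOut at hab ⊢
        split at hab
        · rename_i hcond
          refine ⟨hcond.1, hcond.2.2.1, ?_⟩
          rw [if_pos hcond]
        · exact absurd rfl hab
      obtain ⟨rfl, hfalse, htrue⟩ := key
      have hio := hfair (e i) (hrec i hi) a hedge.1 hact
      rw [hstep] at hio
      obtain ⟨j, hj, hej⟩ := hio i
      obtain ⟨j', hj', hej'⟩ := hrec i hi j
      have h1 : e j a b = true := by rw [hej]; exact htrue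
      have h2 : e j' a b = true := mono j j' (hi.trans hj) hj' b h1
      rw [hej'] at h2
      exact absurd h2 (by rw [hfalse]; simp)
    · -- step = clearOut: the stable edge would be cleared
      have hstep : step P (e i) p = clearOut (e i) p := by rw [step, if_neg h]
      have hio := hfair (e i) (hrec i hi) p hedge.1 hact
      rw [hstep] at hio
      obtain ⟨j, hj, hej⟩ := hio i0
      have h2 := hout j hj
      rw [hej] at h2
      simp [clearOut] at h2
  refine ⟨notact, ?_⟩
  -- Part (ii): every edge incident to p is stable.
  intro r hr
  refine ⟨hr, ?_⟩
  intro i hi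
  by_contra hc
  push_neg at hc
  obtain ⟨h1, h2⟩ := hc
  have hpr : e i p r = false := by simpa using h1
  have hrp : e i r p = false := by simpa using h2
  apply notact i hi
  by_cases h : R2 P (orientOut P (e i) p) p ∧ R3 P (orientOut P (e i) p) p ∧
      R4 P (orientOut P (e i) p) p
  · have hstep : step P (e i) p = orientOut P (e i) p := by rw [step, if_pos h]
    intro heq
    rw [hstep] at heq
    have : orientOut P (e i) p p r = e i p r := by rw [heq]
    rw [hpr] at this
    unfold orientOut at this
    rw [if_pos ⟨rfl, hr, hpr, hrp⟩] at this
    simp at this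
  · have hstep : step P (e i) p = clearOut (e i) p := by rw [step, if_neg h]
    intro heq
    rw [hstep] at heq
    have : clearOut (e i) p p q = e i p q := by rw [heq]
    rw [hout i hi] at this
    simp [clearOut] at this
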